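/- In any symmetric self-adjunction ⟨A, F, φ, γ, χ⟩, the natural transformation κ with κ_A = φ_A ∘ γ_A : A → A satisfies F κ_A = κ_{FA} for every object A. -/
import Mathlib

open CategoryTheory

/-- In a symmetric self-adjunction `⟨A, F, φ, γ, χ⟩`, the natural transformation `κ` with
`κ_A = φ_A ∘ γ_A` satisfies `F κ_A = κ_{FA}` for every object `A`. -/
theorem symmetricSelfAdjunction_F_kappa {A : Type*} [Category A] (F : A ⥤ A)
    (φ : ∀ X : A, F.obj (F.obj X) ⟶ X) (γ : ∀ X : A, X ⟶ F.obj (F.obj X))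
    (χ : ∀ X : A, F.obj (F.obj X) ⟶ F.obj (F.obj X))
    (hφ : ∀ {X Y : A} (f : X ⟶ Y), F.map (F.map f) ≫ φ Y = φ X ≫ f)
    (hγ : ∀ {X Y : A} (f : X ⟶ Y), γ X ≫ F.map (F.map f) = f ≫ γ Y)
    (hχ : ∀ {X Y : A} (f : X ⟶ Y), F.map (F.map f) ≫ χ Y = χ X ≫ F.map (F.map f))
    (htr₁ : ∀ X : A, F.map (γ X) ≫ φ (F.obj X) = 𝟙 (F.obj X))
    (htr₂ : ∀ X : A, γ (F.obj X) ≫ F.map (φ X) = 𝟙 (F.obj X))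
    (hχχ : ∀ X : A, χ X ≫ χ X = 𝟙 (F.obj (F.obj X)))
    (hχχχ : ∀ X : A,
      χ (F.obj X) ≫ F.map (χ X) ≫ χ (F.obj X) =
        F.map (χ X) ≫ χ (F.obj X) ≫ F.map (χ X))
    (hχφ₁ : ∀ X : A, χ X ≫ φ X = φ X)
    (hχγ₁ : ∀ X : A, γ X ≫ χ X = γ X)
    (hχφ₂ : ∀ X : A, F.map (χ X) ≫ φ (F.obj X) = χ (F.obj X) ≫ F.map (φ X))
    (hχγ₂ : ∀ X : A, F.map (γ X) ≫ χ (F.obj X) = γ (F.obj X) ≫ F.map (χ X))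
    (X : A) :
    F.map (γ X ≫ φ X) = γ (F.obj X) ≫ φ (F.obj X) := by
  have hFχχ : F.map (χ X) ≫ F.map (χ X) = 𝟙 (F.obj (F.obj (F.obj X))) := by
    rw [← F.map_comp, hχχ, F.map_id]
  calc F.map (γ X ≫ φ X) = F.map (γ X) ≫ F.map (φ X) := F.map_comp _ _
    _ = F.map (γ X) ≫ (χ (F.obj X) ≫ χ (F.obj X)) ≫ F.map (φ X) := by
        rw [hχχ, Category.id_comp]
    _ = (F.map (γ X) ≫ χ (F.obj X)) ≫ (χ (F.obj X) ≫ F.map (φ X)) := by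
        simp only [Category.assoc]
    _ = (γ (F.obj X) ≫ F.map (χ X)) ≫ (F.map (χ X) ≫ φ (F.obj X)) := by
        rw [hχγ₂, hχφ₂]
    _ = γ (F.obj X) ≫ (F.map (χ X) ≫ F.map (χ X)) ≫ φ (F.obj X) := by
        simp only [Category.assoc]
    _ = γ (F.obj X) ≫ φ (F.obj X) := by rw [hFχχ, Category.id_comp]
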